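/- Let s > 0 and let φ, φ′ ∈ N′ be such that (φ ∩ Q^M_s(o)) ∪ ∂^{in,*}_o(φ) = (φ′ ∩ Q^M_s(o)) ∪ ∂^{in,*}_o(φ′). Then: (i) h_c(φ, x) = h_c(φ′, x) for all x ∈ (φ ∩ Q^M_s(o)) ∪ ∂^{in,*}_o(φ) with {h_g(φ,x), h_g(φ′,x)} ∩ Q_s(o) ≠ ∅; (ii) ∂^{in,*}_o(φ) = ∂^{in}_o(φ) if and only if ∂^{in,*}_o(φ′) = ∂^{in}_o(φ′); (iii) ∂^{out}_o(φ′) = ∂^{out}_o(φ). -/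

import Mathlib

noncomputable section

namespace Lilypond

open scoped ENNReal

/-- Marked points: a spatial position in `ℝ² = ℝ × ℝ` (with the supremum norm)
together with a mark, which is a direction vector in `ℝ²`. -/
abbrev Pt : Type := (ℝ × ℝ) × (ℝ × ℝ)

def e1 : ℝ × ℝ := (1, 0)
def e2 : ℝ × ℝ := (0, 1)

/-- The mark space `M = {e₁, −e₁, e₂, −e₂}`. -/
def Mset : Set (ℝ × ℝ) := {e1, -e1, e2, -e2}

/-- The Euclidean norm on `ℝ²` (the norm of `ℝ × ℝ` itself is the sup-norm `|·|_∞`). -/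
def eNorm (p : ℝ × ℝ) : ℝ := Real.sqrt (p.1 ^ 2 + p.2 ^ 2)

/-- The eight forbidden directions `{±e₁, ±e₂, (±e₁ ± e₂)/√2}`. -/
def badDirs : Set (ℝ × ℝ) :=
  {e1, -e1, e2, -e2, (Real.sqrt 2)⁻¹ • (e1 + e2), (Real.sqrt 2)⁻¹ • (e1 - e2),
    (Real.sqrt 2)⁻¹ • (-e1 + e2), (Real.sqrt 2)⁻¹ • (-e1 - e2)}

/-- The set of spatial positions of a marked configuration. -/
def pos (φ : Set Pt) : Set (ℝ × ℝ) := Prod.fst '' φ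

/-- `A` contains an (infinite) anisotropic descending chain: there are `b > 0` and pairwise
distinct points `ξ₀, ξ₁, ξ₂, …` of `A` with `|ξ₀ − ξ₁|_∞ ≤ b` and
`|ξ_{i+1} − ξ_i|_∞ < |ξ_i − ξ_{i−1}|_∞` for all `i ≥ 1`. -/
def HasInfDescChain (A : Set (ℝ × ℝ)) : Prop :=
  ∃ b > (0 : ℝ), ∃ ξ : ℕ → ℝ × ℝ, Function.Injective ξ ∧ (∀ i, ξ i ∈ A) ∧
    ‖ξ 0 - ξ 1‖ ≤ b ∧ ∀ i, 1 ≤ i → ‖ξ (i + 1) - ξ i‖ < ‖ξ i - ξ (i - 1)‖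

/-- Local finiteness of a marked configuration. -/
def LocFin (φ : Set Pt) : Prop := ∀ r : ℝ, {x ∈ φ | ‖x.1‖ ≤ r}.Finite

/-- A marked set `φ ⊂ ℝ² × M` is admissible: it is locally finite, all marks lie in `M`,
its set of spatial positions contains no anisotropic descending chain, and
`(ξ − η)/|ξ − η| ∉ {±e₁, ±e₂, (±e₁ ± e₂)/√2}` (Euclidean normalization) for all distinct
`x = (ξ,v), y = (η,w) ∈ φ`. -/
def Admissible (φ : Set Pt) : Prop :=
  LocFin φ ∧ (∀ x ∈ φ, x.2 ∈ Mset) ∧ ¬ HasInfDescChain (pos φ) ∧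
    ∀ x ∈ φ, ∀ y ∈ φ, x ≠ y → (eNorm (x.1 - y.1))⁻¹ • (x.1 - y.1) ∉ badDirs

/-- The half-open growth segment `[ξ, ξ + l·v)`, interpreted as the full ray
`ξ + [0,∞)·v` when `l = ∞`. -/
def seg (ξ v : ℝ × ℝ) (l : ℝ≥0∞) : Set (ℝ × ℝ) :=
  {p | ∃ t : ℝ, 0 ≤ t ∧ ENNReal.ofReal t < l ∧ p = ξ + t • v}

/-- The tip `ξ + f(x)·v` of the (finite) segment grown from `x = (ξ, v)`. -/
def tip (f : Pt → ℝ≥0∞) (x : Pt) : ℝ × ℝ := x.1 + (f x).toReal • x.2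

/-- `y = (η, w)` is a stopping neighbor of `x = (ξ, v)` in `φ` (w.r.t. the growth
function `f`): `y ∈ φ`, `ξ + f(x)v ∈ [η, η + f(y)w)` and `|ξ + f(x)v − η| < f(x)`
(Euclidean norm). -/
def IsStopNbr (φ : Set Pt) (f : Pt → ℝ≥0∞) (x y : Pt) : Prop :=
  y ∈ φ ∧ tip f x ∈ seg y.1 y.2 (f y) ∧ eNorm (tip f x - y.1) < (f x).toReal

/-- `f` is a growth function for `φ`: the half-open segments `[ξ, ξ + f(x)v)` are pairwise
disjoint (hard-core property), every `x ∈ φ` with `f(x) < ∞` has a unique stopping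
neighbor, and (as a normalization identifying `f` with a function on `φ`) `f` vanishes
off `φ`. -/
def IsGrowthFn (φ : Set Pt) (f : Pt → ℝ≥0∞) : Prop :=
  (∀ x ∈ φ, ∀ y ∈ φ, x ≠ y → seg x.1 x.2 (f x) ∩ seg y.1 y.2 (f y) = ∅) ∧
  (∀ x ∈ φ, f x ≠ ⊤ → ∃! y, IsStopNbr φ f x y) ∧
  (∀ x, x ∉ φ → f x = 0)

open Classical in
/-- The growth function `f_φ` of a configuration (chosen by choice; it is unique on
admissible configurations). -/
def growthFn (φ : Set Pt) : Pt → ℝ≥0∞ :=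
  if h : ∃ f, IsGrowthFn φ f then h.choose else fun _ => 0

/-- `N′`: nonempty admissible configurations possessing a growth function which is
finite everywhere on the configuration. -/
def Nprime (φ : Set Pt) : Prop :=
  φ.Nonempty ∧ Admissible φ ∧ (∃ f, IsGrowthFn φ f) ∧ ∀ x ∈ φ, growthFn φ x ≠ ⊤

open Classical in
/-- The combinatorial descendant `h_c(φ, x)`: the (unique) stopping neighbor of `x`
in `φ`. -/
def hc (φ : Set Pt) (x : Pt) : Pt :=
  if h : ∃ y, IsStopNbr φ (growthFn φ) x y then h.choose else x

/-- The geometric descendant `h_g(φ, x) = ξ + f_φ(x)·v`. -/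
def hg (φ : Set Pt) (x : Pt) : ℝ × ℝ := tip (growthFn φ) x

/-- The closed segment `I(φ, x) = [ξ, h_g(φ, x)]`. -/
def I (φ : Set Pt) (x : Pt) : Set (ℝ × ℝ) := segment ℝ x.1 (hg φ x)


/-- The square `Q_s(o) = [−s/2, s/2]²` (a closed sup-norm ball around the origin). -/
def Qb (s : ℝ) : Set (ℝ × ℝ) := {p | ‖p‖ ≤ s / 2}

/-- The marked square `Q^M_s(o) = Q_s(o) × M`. -/
def QbM (s : ℝ) : Set Pt := {x | ‖x.1‖ ≤ s / 2}

/-- `∂^{in,*}_o(φ) = {x ∈ φ ∖ Q^M_s(o) : I(φ, x) ∩ Q_s(o) ≠ ∅}`. -/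
def inStar (s : ℝ) (φ : Set Pt) : Set Pt :=
  {x | x ∈ φ ∧ x ∉ QbM s ∧ (I φ x ∩ Qb s).Nonempty}

/-- `∂^{in}_o(φ) = {x ∈ φ ∖ Q^M_s(o) : h_g(φ, x) ∈ Q_s(o)}`. -/
def inB (s : ℝ) (φ : Set Pt) : Set Pt :=
  {x | x ∈ φ ∧ x ∉ QbM s ∧ hg φ x ∈ Qb s}

/-- `∂^{out}_o(φ) = {x ∈ φ ∩ Q^M_s(o) : h_g(φ, x) ∉ Q_s(o)}`. -/
def outB (s : ℝ) (φ : Set Pt) : Set Pt :=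
  {x | x ∈ φ ∧ x ∈ QbM s ∧ hg φ x ∉ Qb s}
/-! Call `x` a discrepancy if its segment meets `Q_s(o)` and stops strictly earlier in `φ` than in
`φ′`, at a tip inside `Q_s(o)`. Its stopping neighbour `y` in `φ` then also meets the square, so it
belongs to `φ′` too; there the segment of `x` runs through the stopping point, so by the hard-core
property `y` stops in `φ′` before reaching it. Thus `y` is a discrepancy with the roles of `φ` and
`φ′` exchanged, of smaller length and with base at bounded distance from the square. Local
finiteness rules out an infinite descent of this kind, so there are no discrepancies; then growth
functions, tips and stopping neighbours agree at every point whose segment meets the square. -/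

end Lilypond

open Set

theorem eq_empty_of_forall_exists_lt {α : Type*} {S : Set α} (p m : α → ℝ) (c : ℝ)
    (hfin : ∀ r, {x ∈ S | p x ≤ r}.Finite)
    (hstep : ∀ z ∈ S, ∃ w ∈ S, m w < m z ∧ p w ≤ c + m z) : S = ∅ := by
  by_contra hne
  obtain ⟨z₀, hz₀⟩ := nonempty_iff_ne_empty.mpr hne
  set r := max (p z₀) (c + m z₀)
  obtain ⟨z, ⟨hzS, -, hzm⟩, hmin⟩ := exists_min_image {x ∈ S | p x ≤ r ∧ m x ≤ m z₀} m
    ((hfin r).subset fun x hx => ⟨hx.1, hx.2.1⟩) ⟨z₀, hz₀, le_max_left _ _, le_rfl⟩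
  obtain ⟨w, hwS, hwz, hwp⟩ := hstep z hzS
  have hwr : p w ≤ r := by linarith [le_max_right (p z₀) (c + m z₀)]
  exact (hmin w ⟨hwS, hwr, by linarith⟩).not_gt hwz

theorem Convex.ordConnected_preimage_line {E : Type*} [AddCommGroup E] [Module ℝ E] {K : Set E}
    (hK : Convex ℝ K) (ξ v : E) : {c : ℝ | ξ + c • v ∈ K}.OrdConnected := by
  refine convex_iff_ordConnected.mp fun a ha b hb θ μ hθ hμ hθμ => ?_
  have hcomb : ξ + (θ • a + μ • b) • v = θ • (ξ + a • v) + μ • (ξ + b • v) := by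
    linear_combination (norm := module) -hθμ • ξ
  show ξ + (θ • a + μ • b) • v ∈ K
  exact hcomb ▸ hK ha hb hθ hμ hθμ

theorem segment_add_smul_eq_image {E : Type*} [AddCommGroup E] [Module ℝ E] (ξ v : E) {b : ℝ}
    (hb : 0 ≤ b) : segment ℝ ξ (ξ + b • v) = (fun u : ℝ => ξ + u • v) '' Icc 0 b := by
  have hL : ∀ u : ℝ, AffineMap.lineMap ξ (ξ + v) u = ξ + u • v := fun u => by
    simp [AffineMap.lineMap_apply, add_comm]
  rw [← segment_eq_Icc hb, ← funext hL, image_segment, hL, hL, zero_smul, add_zero]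

namespace Lilypond

open scoped ENNReal

lemma norm_of_mem_Mset {v : ℝ × ℝ} (hv : v ∈ Mset) : ‖v‖ = 1 := by
  rcases hv with rfl | rfl | rfl | rfl <;> simp [e1, e2, Prod.norm_def]

lemma eNorm_smul_of_mem_Mset {v : ℝ × ℝ} (hv : v ∈ Mset) {t : ℝ} (ht : 0 ≤ t) :
    eNorm (t • v) = t := by
  rcases hv with rfl | rfl | rfl | rfl <;> simp [eNorm, e1, e2, Real.sqrt_sq ht]

lemma convex_Qb (s : ℝ) : Convex ℝ (Qb s) := by
  have hball : Qb s = Metric.closedBall 0 (s / 2) := by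
    ext p
    simp [Qb]
  exact hball ▸ convex_closedBall _ _

lemma tip_mem_seg {f : Pt → ℝ≥0∞} {x : Pt} {l : ℝ≥0∞} (hfx : f x ≠ ⊤) (hl : f x < l) :
    tip f x ∈ seg x.1 x.2 l :=
  ⟨(f x).toReal, ENNReal.toReal_nonneg, by rwa [ENNReal.ofReal_toReal hfx], rfl⟩

section StopNbr

variable {φ : Set Pt} {f : Pt → ℝ≥0∞} {x y : Pt}

lemma IsStopNbr.exists_param (h : IsStopNbr φ f x y) (hy : y.2 ∈ Mset) :
    ∃ t, 0 ≤ t ∧ ENNReal.ofReal t < f y ∧ t < (f x).toReal ∧ tip f x = y.1 + t • y.2 := by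
  obtain ⟨-, ⟨t, ht0, hty, htip⟩, hdist⟩ := h
  refine ⟨t, ht0, hty, ?_, htip⟩
  rwa [htip, add_sub_cancel_left, eNorm_smul_of_mem_Mset hy ht0] at hdist

lemma IsStopNbr.ne (h : IsStopNbr φ f x y) (hx : x.2 ∈ Mset) : x ≠ y := by
  rintro rfl
  have hdist := h.2.2
  rw [tip, add_sub_cancel_left, eNorm_smul_of_mem_Mset hx ENNReal.toReal_nonneg] at hdist
  exact hdist.false

end StopNbr

section Nprime

variable {φ : Set Pt} {x y : Pt}

lemma Nprime.isGrowthFn (hφ : Nprime φ) : IsGrowthFn φ (growthFn φ) := by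
  rw [growthFn, dif_pos hφ.2.2.1]
  exact hφ.2.2.1.choose_spec

lemma Nprime.locFin (hφ : Nprime φ) : LocFin φ := hφ.2.1.1

lemma Nprime.mark_mem (hφ : Nprime φ) (hx : x ∈ φ) : x.2 ∈ Mset := hφ.2.1.2.1 x hx

lemma Nprime.growthFn_ne_top (hφ : Nprime φ) (hx : x ∈ φ) : growthFn φ x ≠ ⊤ := hφ.2.2.2 x hx

lemma Nprime.hc_isStopNbr (hφ : Nprime φ) (hx : x ∈ φ) : IsStopNbr φ (growthFn φ) x (hc φ x) := by
  have hex := (hφ.isGrowthFn.2.1 x hx (hφ.growthFn_ne_top hx)).exists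
  rw [hc, dif_pos hex]
  exact hex.choose_spec

lemma Nprime.hc_eq_of_isStopNbr (hφ : Nprime φ) (hx : x ∈ φ)
    (hy : IsStopNbr φ (growthFn φ) x y) : hc φ x = y :=
  (hφ.isGrowthFn.2.1 x hx (hφ.growthFn_ne_top hx)).unique (hφ.hc_isStopNbr hx) hy

end Nprime

def hitting (s : ℝ) (φ : Set Pt) : Set Pt := {x ∈ φ | (I φ x ∩ Qb s).Nonempty}

section Hitting

variable {s : ℝ} {φ : Set Pt} {x y : Pt}

lemma mem_I_iff {p : ℝ × ℝ} :
    p ∈ I φ x ↔ ∃ u ∈ Icc 0 (growthFn φ x).toReal, x.1 + u • x.2 = p := by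
  rw [I, hg, tip, segment_add_smul_eq_image _ _ ENNReal.toReal_nonneg, mem_image]

lemma mem_hitting_of_mem_inter_QbM (hx : x ∈ φ ∩ QbM s) : x ∈ hitting s φ :=
  ⟨hx.1, x.1, left_mem_segment ℝ _ _, hx.2⟩

lemma inter_QbM_union_inStar : (φ ∩ QbM s) ∪ inStar s φ = hitting s φ := by
  ext x
  constructor
  · rintro (hx | ⟨hx, -, hI⟩)
    · exact mem_hitting_of_mem_inter_QbM hx
    · exact ⟨hx, hI⟩
  · rintro ⟨hx, hI⟩
    by_cases hxQ : x ∈ QbM s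
    · exact Or.inl ⟨hx, hxQ⟩
    · exact Or.inr ⟨hx, hxQ, hI⟩

lemma inter_QbM_eq_hitting_inter : φ ∩ QbM s = hitting s φ ∩ QbM s := by
  ext x
  exact ⟨fun hx => ⟨mem_hitting_of_mem_inter_QbM hx, hx.2⟩, fun hx => ⟨hx.1.1, hx.2⟩⟩

lemma inStar_eq_hitting_diff : inStar s φ = hitting s φ \ QbM s := by
  ext x
  exact ⟨fun hx => ⟨⟨hx.1, hx.2.2⟩, hx.2.1⟩, fun hx => ⟨hx.1.1, hx.2, hx.1.2⟩⟩

lemma inStar_eq_inB_iff : inStar s φ = inB s φ ↔ ∀ x ∈ inStar s φ, hg φ x ∈ Qb s := by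
  refine ⟨fun h x hx => (h ▸ hx : x ∈ inB s φ).2.2, fun h => ?_⟩
  ext x
  exact ⟨fun hx => ⟨hx.1, hx.2.1, h x hx⟩,
    fun hx => ⟨hx.1, hx.2.1, hg φ x, right_mem_segment ℝ _ _, hx.2.2⟩⟩

lemma outB_eq_sep : outB s φ = {x ∈ φ ∩ QbM s | hg φ x ∉ Qb s} := by
  ext x
  exact and_assoc.symm

lemma mem_hitting_of_mem_seg (hφ : Nprime φ) (hy : y ∈ φ) {t : ℝ} (ht0 : 0 ≤ t)
    (hty : ENNReal.ofReal t < growthFn φ y) (hQ : y.1 + t • y.2 ∈ Qb s) : y ∈ hitting s φ := by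
  have htf : t ≤ (growthFn φ y).toReal :=
    ((ENNReal.ofReal_lt_iff_lt_toReal ht0 (hφ.growthFn_ne_top hy)).mp hty).le
  exact ⟨hy, _, mem_I_iff.mpr ⟨t, ⟨ht0, htf⟩, rfl⟩, hQ⟩

lemma hg_mem_Qb_of_le (hx : x ∈ hitting s φ) {b : ℝ} (hb : (growthFn φ x).toReal ≤ b)
    (hbQ : x.1 + b • x.2 ∈ Qb s) : hg φ x ∈ Qb s := by
  obtain ⟨-, p, hpI, hpQ⟩ := hx
  obtain ⟨u, ⟨-, hu⟩, rfl⟩ := mem_I_iff.mp hpI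
  exact ((convex_Qb s).ordConnected_preimage_line x.1 x.2).out hpQ hbQ ⟨hu, hb⟩

end Hitting

def IsDiscrepancy (s : ℝ) (φ φ' : Set Pt) (x : Pt) : Prop :=
  x ∈ hitting s φ ∧ growthFn φ x < growthFn φ' x ∧ hg φ x ∈ Qb s

section Discrepancy

variable {s : ℝ} {φ φ' : Set Pt} {x y : Pt}

lemma isDiscrepancy_of_le_ofReal (hy : y ∈ hitting s φ') {t : ℝ} (ht0 : 0 ≤ t)
    (hle : growthFn φ' y ≤ ENNReal.ofReal t) (hlt : ENNReal.ofReal t < growthFn φ y)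
    (hQ : y.1 + t • y.2 ∈ Qb s) : IsDiscrepancy s φ' φ y :=
  ⟨hy, hle.trans_lt hlt, hg_mem_Qb_of_le hy (ENNReal.toReal_le_of_le_ofReal ht0 hle) hQ⟩

variable (hφ : Nprime φ) (hφ' : Nprime φ') (heq : hitting s φ = hitting s φ')
include hφ hφ' heq

lemma IsDiscrepancy.exists_swap (hx : IsDiscrepancy s φ φ' x) :
    ∃ y, IsDiscrepancy s φ' φ y ∧ (growthFn φ' y).toReal < (growthFn φ x).toReal ∧
      ‖y.1‖ ≤ s / 2 + (growthFn φ x).toReal := by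
  obtain ⟨hxhit, hlt, hxQ⟩ := hx
  have hstop := hφ.hc_isStopNbr hxhit.1
  set y := hc φ x
  obtain ⟨t, ht0, hty, htx, htip⟩ := hstop.exists_param (hφ.mark_mem hstop.1)
  have hyQ : y.1 + t • y.2 ∈ Qb s := htip ▸ hxQ
  have hyhit' : y ∈ hitting s φ' := heq ▸ mem_hitting_of_mem_seg hφ hstop.1 ht0 hty hyQ
  -- in `φ′` the segment of `x` runs through the stopping point, so `y` must stop before it
  have hle : growthFn φ' y ≤ ENNReal.ofReal t := by
    refine not_lt.mp fun hcon => ?_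
    have hdisj := hφ'.isGrowthFn.1 x (heq ▸ hxhit).1 y hyhit'.1 (hstop.ne (hφ.mark_mem hxhit.1))
    exact eq_empty_iff_forall_notMem.mp hdisj (tip (growthFn φ) x)
      ⟨tip_mem_seg (hφ.growthFn_ne_top hxhit.1) hlt, t, ht0, hcon, htip⟩
  have hyt : (growthFn φ' y).toReal ≤ t := ENNReal.toReal_le_of_le_ofReal ht0 hle
  refine ⟨y, isDiscrepancy_of_le_ofReal hyhit' ht0 hle hty hyQ, hyt.trans_lt htx, ?_⟩
  calc ‖y.1‖ ≤ ‖y.1 + t • y.2‖ + ‖t • y.2‖ := by simpa using norm_sub_le (y.1 + t • y.2) (t • y.2)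
    _ ≤ s / 2 + t := by
      rw [norm_smul, norm_of_mem_Mset (hφ.mark_mem hstop.1), Real.norm_of_nonneg ht0, mul_one]
      exact add_le_add_left hyQ t
    _ ≤ s / 2 + (growthFn φ x).toReal := by linarith

lemma not_isDiscrepancy (x : Pt) : ¬ IsDiscrepancy s φ φ' x := by
  have hmin : ∀ {ψ ψ' : Set Pt} {z : Pt}, IsDiscrepancy s ψ ψ' z →
      min (growthFn ψ z) (growthFn ψ' z) = growthFn ψ z := fun hz => min_eq_left hz.2.1.le
  have hempty : {z | IsDiscrepancy s φ φ' z ∨ IsDiscrepancy s φ' φ z} = ∅ := by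
    refine eq_empty_of_forall_exists_lt (fun z => ‖z.1‖)
      (fun z => (min (growthFn φ z) (growthFn φ' z)).toReal) (s / 2) (fun r => ?_) ?_
    · refine (hφ.locFin r).subset fun z ⟨hz, hr⟩ => ⟨?_, hr⟩
      rcases hz with hz | hz
      exacts [hz.1.1, (heq ▸ hz.1).1]
    · rintro z (hz | hz)
      · obtain ⟨w, hw, hwz, hwn⟩ := hz.exists_swap hφ hφ' heq
        refine ⟨w, Or.inr hw, ?_⟩
        rw [min_comm (growthFn φ w), hmin hw, hmin hz]
        exact ⟨hwz, hwn⟩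
      · obtain ⟨w, hw, hwz, hwn⟩ := hz.exists_swap hφ' hφ heq.symm
        refine ⟨w, Or.inl hw, ?_⟩
        rw [min_comm (growthFn φ z), hmin hw, hmin hz]
        exact ⟨hwz, hwn⟩
  exact fun hx => (eq_empty_iff_forall_notMem.mp hempty) x (Or.inl hx)

lemma not_growthFn_lt (hx : x ∈ hitting s φ) (hQ : hg φ x ∈ Qb s ∨ hg φ' x ∈ Qb s) :
    ¬ growthFn φ x < growthFn φ' x := by
  intro hlt
  have hle := ENNReal.toReal_mono (hφ'.growthFn_ne_top (heq ▸ hx).1) hlt.le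
  exact not_isDiscrepancy hφ hφ' heq x ⟨hx, hlt, hQ.elim id (hg_mem_Qb_of_le hx hle)⟩

lemma growthFn_eq (hx : x ∈ hitting s φ) (hQ : hg φ x ∈ Qb s ∨ hg φ' x ∈ Qb s) :
    growthFn φ x = growthFn φ' x :=
  le_antisymm (not_lt.mp (not_growthFn_lt hφ' hφ heq.symm (heq ▸ hx) hQ.symm))
    (not_lt.mp (not_growthFn_lt hφ hφ' heq hx hQ))

lemma hg_eq (hx : x ∈ hitting s φ) (hQ : hg φ x ∈ Qb s ∨ hg φ' x ∈ Qb s) : hg φ x = hg φ' x := by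
  rw [hg, hg, tip, tip, growthFn_eq hφ hφ' heq hx hQ]

lemma hg_mem_Qb_iff (hx : x ∈ hitting s φ) : hg φ x ∈ Qb s ↔ hg φ' x ∈ Qb s :=
  ⟨fun h => hg_eq hφ hφ' heq hx (Or.inl h) ▸ h, fun h => (hg_eq hφ hφ' heq hx (Or.inr h)).symm ▸ h⟩

lemma hc_eq (hx : x ∈ hitting s φ) (hQ : hg φ x ∈ Qb s ∨ hg φ' x ∈ Qb s) : hc φ x = hc φ' x := by
  have hf := growthFn_eq hφ hφ' heq hx hQ
  have htip : tip (growthFn φ') x = tip (growthFn φ) x := by rw [tip, tip, hf]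
  have hstop := hφ.hc_isStopNbr hx.1
  set y := hc φ x
  obtain ⟨t, ht0, hty, -, htip_y⟩ := hstop.exists_param (hφ.mark_mem hstop.1)
  have hxQ : hg φ x ∈ Qb s := hQ.elim id (hg_mem_Qb_iff hφ hφ' heq hx).mpr
  have hyQ : y.1 + t • y.2 ∈ Qb s := htip_y ▸ hxQ
  have hyhit' : y ∈ hitting s φ' := heq ▸ mem_hitting_of_mem_seg hφ hstop.1 ht0 hty hyQ
  have hty' : ENNReal.ofReal t < growthFn φ' y := by
    by_contra! hle
    exact not_isDiscrepancy hφ' hφ heq.symm y (isDiscrepancy_of_le_ofReal hyhit' ht0 hle hty hyQ)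
  refine (hφ'.hc_eq_of_isStopNbr (heq ▸ hx).1 ⟨hyhit'.1, ⟨t, ht0, hty', htip ▸ htip_y⟩, ?_⟩).symm
  rw [htip, ← hf]
  exact hstop.2.2

end Discrepancy

theorem boundary_determined_general (s : ℝ) (φ φ' : Set Pt)
    (hφ : Nprime φ) (hφ' : Nprime φ')
    (heq : (φ ∩ QbM s) ∪ inStar s φ = (φ' ∩ QbM s) ∪ inStar s φ') :
    (∀ x ∈ (φ ∩ QbM s) ∪ inStar s φ,
        (hg φ x ∈ Qb s ∨ hg φ' x ∈ Qb s) → hc φ x = hc φ' x) ∧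
    (inStar s φ = inB s φ ↔ inStar s φ' = inB s φ') ∧
    outB s φ' = outB s φ := by
  have hhit : hitting s φ = hitting s φ' := by
    rwa [← inter_QbM_union_inStar, ← inter_QbM_union_inStar]
  have hStar : inStar s φ = inStar s φ' := by
    rw [inStar_eq_hitting_diff, hhit, ← inStar_eq_hitting_diff]
  have hQM : φ ∩ QbM s = φ' ∩ QbM s := by
    rw [inter_QbM_eq_hitting_inter, hhit, ← inter_QbM_eq_hitting_inter]
  refine ⟨fun x hx hQ => hc_eq hφ hφ' hhit (inter_QbM_union_inStar ▸ hx) hQ, ?_, ?_⟩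
  · rw [inStar_eq_inB_iff, inStar_eq_inB_iff, ← hStar]
    exact forall₂_congr fun x hx => hg_mem_Qb_iff hφ hφ' hhit ⟨hx.1, hx.2.2⟩
  · rw [outB_eq_sep, outB_eq_sep, hQM]
    ext x
    refine and_congr_right fun hx => not_congr (hg_mem_Qb_iff hφ hφ' hhit ?_).symm
    exact mem_hitting_of_mem_inter_QbM (hQM ▸ hx)

/-- Lemma: the restriction of the lilypond model to a square is
determined by the entering segments.  Let `s > 0` and `φ, φ′ ∈ N′` with
`(φ ∩ Q^M_s(o)) ∪ ∂^{in,*}_o(φ) = (φ′ ∩ Q^M_s(o)) ∪ ∂^{in,*}_o(φ′)`.  Then: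
(i) `h_c(φ, x) = h_c(φ′, x)` for all `x ∈ (φ ∩ Q^M_s(o)) ∪ ∂^{in,*}_o(φ)` with
`{h_g(φ,x), h_g(φ′,x)} ∩ Q_s(o) ≠ ∅`;
(ii) `∂^{in,*}_o(φ) = ∂^{in}_o(φ)` iff `∂^{in,*}_o(φ′) = ∂^{in}_o(φ′)`;
(iii) `∂^{out}_o(φ′) = ∂^{out}_o(φ)`. -/
theorem boundary_determined (s : ℝ) (hs : 0 < s) (φ φ' : Set Pt)
    (hφ : Nprime φ) (hφ' : Nprime φ')
    (heq : (φ ∩ QbM s) ∪ inStar s φ = (φ' ∩ QbM s) ∪ inStar s φ') :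
    (∀ x ∈ (φ ∩ QbM s) ∪ inStar s φ,
        (hg φ x ∈ Qb s ∨ hg φ' x ∈ Qb s) → hc φ x = hc φ' x) ∧
    (inStar s φ = inB s φ ↔ inStar s φ' = inB s φ') ∧
    outB s φ' = outB s φ :=
  boundary_determined_general s φ φ' hφ hφ' heq

end Lilypond
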